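/- For the layer-normalized loss L(W) = E[ℓ(y, W_U (Wx/‖Wx‖))], the gradient equals ∇_W L(W) = ∑_{k=1}^N E_x[((p̂_W(k|x) - p(y=k|x))/‖Wx‖) · (I - (Wx)(Wx)^⊤/‖Wx‖²) w_U(k) x^⊤], i.e., each update direction w_U(k)x^⊤ is projected orthogonally to the current output direction Wx. -/

import Mathlib

/-!
Differentiate along the single entry `W a b`. The Jacobian of `v ↦ v / ‖v‖` is
`‖v‖⁻¹ (I - v vᵀ / ‖v‖²)` and the gradient of `ξ ↦ ℓ(y, ξ)` is `softmax ξ - e_y`, so by the chain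
rule each sample contributes `∑ₖ (p̂_W(k|x) - 1[y = k])` times the projected direction
`‖Wx‖⁻¹ (I - (Wx)(Wx)ᵀ/‖Wx‖²) w_U(k) xᵀ`. That direction depends on the sample only through `x`,
so on each fibre of `x` the indicator `1[y = k]` may be replaced by its conditional expectation
`p(y = k | x)`.
-/

open Finset

noncomputable def softmax {N : ℕ} (ξ : Fin N → ℝ) (k : Fin N) : ℝ :=
  Real.exp (ξ k) / ∑ j, Real.exp (ξ j)

noncomputable def crossEntropy {N : ℕ} (y : Fin N) (ξ : Fin N → ℝ) : ℝ :=
  - Real.log (softmax ξ y)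

/-- `(W v) a = ∑ b, W a b * v b`. -/
noncomputable def mulVec' {d e : ℕ} (W : Fin d → Fin e → ℝ) (v : Fin e → ℝ) : Fin d → ℝ :=
  fun a => ∑ b, W a b * v b

/-- Euclidean norm on `ℝ^d`. -/
noncomputable def nrm {d : ℕ} (v : Fin d → ℝ) : ℝ := Real.sqrt (∑ a, (v a) ^ 2)

/-- Update the `(a,b)` entry of a matrix to the value `s`. -/
def updEntry {d e : ℕ} (W : Fin d → Fin e → ℝ) (a : Fin d) (b : Fin e) (s : ℝ) :
    Fin d → Fin e → ℝ :=
  Function.update W a (Function.update (W a) b s)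

lemma sum_mul_condProb_mul_comp {Ω α : Type*} [Fintype Ω] [DecidableEq α] {p : Ω → ℝ}
    (hp : ∀ ω, 0 ≤ p ω) (X : Ω → α) (E : Ω → Prop) [DecidablePred E] (G : α → ℝ) :
    ∑ ω, p ω * ((∑ ω' ∈ univ.filter (fun ω' => X ω' = X ω ∧ E ω'), p ω') /
        (∑ ω' ∈ univ.filter (fun ω' => X ω' = X ω), p ω')) * G (X ω) =
      ∑ ω, p ω * (if E ω then 1 else 0) * G (X ω) := by
  have hX : ∀ ω ∈ (univ : Finset Ω), X ω ∈ univ.image X := fun ω _ =>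
    mem_image_of_mem X (mem_univ ω)
  rw [← sum_fiberwise_of_maps_to hX, ← sum_fiberwise_of_maps_to hX]
  refine sum_congr rfl fun x _ => ?_
  set A := ∑ ω' ∈ univ.filter (fun ω' => X ω' = x), p ω'
  set B := ∑ ω' ∈ univ.filter (fun ω' => X ω' = x ∧ E ω'), p ω'
  have hBA : A = 0 → B = 0 := fun hA => by
    have hle : B ≤ A := sum_le_sum_of_subset_of_nonneg
      (monotone_filter_right _ fun _ _ h => h.1) fun ω _ _ => hp ω
    linarith [sum_nonneg fun ω (_ : ω ∈ univ.filter (fun ω' => X ω' = x ∧ E ω')) => hp ω]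
  have hB : ∑ ω ∈ univ.filter (fun ω => X ω = x), p ω * (if E ω then 1 else 0) = B := by
    simp only [mul_ite, mul_one, mul_zero, ← sum_filter, filter_filter, B]
  calc ∑ ω ∈ univ.filter (fun ω => X ω = x),
        p ω * ((∑ ω' ∈ univ.filter (fun ω' => X ω' = X ω ∧ E ω'), p ω') /
          (∑ ω' ∈ univ.filter (fun ω' => X ω' = X ω), p ω')) * G (X ω)
      = ∑ ω ∈ univ.filter (fun ω => X ω = x), p ω * (B / A) * G x :=
        sum_congr rfl fun ω hω => by rw [(mem_filter.1 hω).2]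
    _ = B * G x := by rw [← sum_mul, ← sum_mul, mul_div_assoc', mul_div_cancel_left_of_imp hBA]
    _ = ∑ ω ∈ univ.filter (fun ω => X ω = x), p ω * (if E ω then 1 else 0) * G (X ω) := by
        rw [← hB, sum_mul]
        exact sum_congr rfl fun ω hω => by rw [(mem_filter.1 hω).2]

section Derivatives

variable {d e N : ℕ}

lemma updEntry_self (W : Fin d → Fin e → ℝ) (a : Fin d) (b : Fin e) :
    updEntry W a b (W a b) = W := by
  simp [updEntry]

lemma mulVec'_updEntry (W : Fin d → Fin e → ℝ) (x : Fin e → ℝ) (a : Fin d) (b : Fin e) (s : ℝ) :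
    mulVec' (updEntry W a b s) x = mulVec' W x + (s - W a b) • Pi.single a (x b) := by
  funext i
  by_cases hi : i = a
  · subst hi
    simp only [mulVec', updEntry, Function.update_apply, ite_mul, if_true, Pi.add_apply,
      Pi.smul_apply, Pi.single_eq_same, smul_eq_mul]
    rw [show (s - W i b) * x b = ∑ j, if j = b then (s - W i j) * x j else 0 by simp,
      ← sum_add_distrib]
    refine sum_congr rfl fun j _ => ?_
    split_ifs with hj
    · subst hj; ring
    · ring
  · simp [mulVec', updEntry, hi]

lemma hasDerivAt_mulVec'_updEntry (W : Fin d → Fin e → ℝ) (x : Fin e → ℝ) (a : Fin d)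
    (b : Fin e) :
    HasDerivAt (fun s => mulVec' (updEntry W a b s) x) (Pi.single a (x b)) (W a b) := by
  simp_rw [mulVec'_updEntry]
  simpa using (((hasDerivAt_id (W a b)).sub_const (W a b)).smul_const
    (Pi.single a (x b) : Fin d → ℝ)).const_add (mulVec' W x)

lemma nrm_pos {v : Fin d → ℝ} (hv : v ≠ 0) : 0 < nrm v := by
  obtain ⟨i, hi⟩ := Function.ne_iff.mp hv
  exact Real.sqrt_pos.2
    (sum_pos' (fun j _ => sq_nonneg (v j)) ⟨i, mem_univ i, sq_pos_of_ne_zero hi⟩)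

lemma HasDerivAt.nrm {v : ℝ → Fin d → ℝ} {v' : Fin d → ℝ} {t : ℝ} (h : HasDerivAt v v' t)
    (h0 : v t ≠ 0) :
    HasDerivAt (fun s => nrm (v s)) ((∑ i, v t i * v' i) / nrm (v t)) t := by
  have hsq : HasDerivAt (fun s => ∑ i, v s i ^ 2) (∑ i, 2 * v t i * v' i) t :=
    HasDerivAt.fun_sum fun i _ => by
      simpa [mul_comm] using (hasDerivAt_pi.1 h i).fun_pow 2
  have hq : ∑ i, v t i ^ 2 ≠ 0 := by
    have := nrm_pos h0
    rw [_root_.nrm, Real.sqrt_pos] at this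
    exact this.ne'
  refine (hsq.sqrt hq).congr_deriv ?_
  simp only [mul_assoc, ← mul_sum]
  rw [mul_div_mul_left _ _ two_ne_zero]
  rfl

lemma HasDerivAt.sum_mul_div_nrm (w : Fin d → ℝ) {v : ℝ → Fin d → ℝ} {v' : Fin d → ℝ} {t : ℝ}
    (h : HasDerivAt v v' t) (h0 : v t ≠ 0) :
    HasDerivAt (fun s => ∑ i, w i * (v s i / _root_.nrm (v s)))
      ((∑ i, w i * v' i - (∑ i, v t i * w i) * (∑ i, v t i * v' i) / _root_.nrm (v t) ^ 2) /
        _root_.nrm (v t)) t := by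
  have hn := (nrm_pos h0).ne'
  have hinner : HasDerivAt (fun s => ∑ i, w i * v s i) (∑ i, w i * v' i) t :=
    HasDerivAt.fun_sum fun i _ => (hasDerivAt_pi.1 h i).const_mul (w i)
  simp only [mul_div_assoc', ← sum_div]
  refine (hinner.div (h.nrm h0) hn).congr_deriv ?_
  simp only [mul_comm (v t _) (w _)]
  field_simp

lemma crossEntropy_eq_log_sum_exp_sub (y : Fin N) (ξ : Fin N → ℝ) :
    crossEntropy y ξ = Real.log (∑ j, Real.exp (ξ j)) - ξ y := by
  have hS : 0 < ∑ j, Real.exp (ξ j) := sum_pos (fun j _ => Real.exp_pos _) ⟨y, mem_univ y⟩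
  rw [crossEntropy, softmax, Real.log_div (Real.exp_ne_zero _) hS.ne', Real.log_exp]
  ring

lemma HasDerivAt.crossEntropy (y : Fin N) {ξ : ℝ → Fin N → ℝ} {ξ' : Fin N → ℝ} {t : ℝ}
    (h : HasDerivAt ξ ξ' t) :
    HasDerivAt (fun s => _root_.crossEntropy y (ξ s))
      (∑ k, (softmax (ξ t) k - if y = k then 1 else 0) * ξ' k) t := by
  have hS : 0 < ∑ j, Real.exp (ξ t j) := sum_pos (fun j _ => Real.exp_pos _) ⟨y, mem_univ y⟩
  have hlse : HasDerivAt (fun s => Real.log (∑ j, Real.exp (ξ s j)))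
      ((∑ j, Real.exp (ξ t j) * ξ' j) / ∑ j, Real.exp (ξ t j)) t :=
    (HasDerivAt.fun_sum fun j _ => (hasDerivAt_pi.1 h j).exp).log hS.ne'
  simp only [crossEntropy_eq_log_sum_exp_sub]
  refine (hlse.sub (hasDerivAt_pi.1 h y)).congr_deriv ?_
  simp [sub_mul, sum_sub_distrib, softmax, sum_div, div_mul_eq_mul_div]

/-- The `(a, b)` entry of `‖Wx‖⁻¹ (I - (Wx)(Wx)ᵀ/‖Wx‖²) w_U(k) xᵀ`. -/
noncomputable def layerNormUpdate (wU : Fin N → Fin d → ℝ) (W : Fin d → Fin e → ℝ)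
    (x : Fin e → ℝ) (k : Fin N) (a : Fin d) (b : Fin e) : ℝ :=
  (wU k a - mulVec' W x a * (∑ i, mulVec' W x i * wU k i) / nrm (mulVec' W x) ^ 2) * x b /
    nrm (mulVec' W x)

lemma hasDerivAt_crossEntropy_layerNorm_updEntry (wU : Fin N → Fin d → ℝ)
    (W : Fin d → Fin e → ℝ) (x : Fin e → ℝ) (y : Fin N) (a : Fin d) (b : Fin e)
    (hx : mulVec' W x ≠ 0) :
    HasDerivAt (fun s => crossEntropy y (fun k => ∑ i, wU k i *
        (mulVec' (updEntry W a b s) x i / nrm (mulVec' (updEntry W a b s) x))))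
      (∑ k, (softmax (fun k => ∑ i, wU k i * (mulVec' W x i / nrm (mulVec' W x))) k -
        if y = k then 1 else 0) * layerNormUpdate wU W x k a b) (W a b) := by
  have hv := hasDerivAt_mulVec'_updEntry W x a b
  have h0 : mulVec' (updEntry W a b (W a b)) x ≠ 0 := by rwa [updEntry_self]
  have hlogits := hasDerivAt_pi.2 fun k => hv.sum_mul_div_nrm (wU k) h0
  refine (hlogits.crossEntropy y).congr_deriv ?_
  simp only [updEntry_self]
  refine sum_congr rfl fun k _ => congrArg _ ?_
  simp only [layerNormUpdate, Pi.single_apply, mul_ite, mul_zero, sum_ite_eq', mem_univ, if_true]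
  ring

end Derivatives

open Classical in
theorem grad_layernorm_loss_general {N d : ℕ} {Ω : Type} [Fintype Ω]
    (p : Ω → ℝ) (hp0 : ∀ ω, 0 ≤ p ω)
    (X : Ω → Fin d → ℝ) (Y : Ω → Fin N)
    (wU : Fin N → Fin d → ℝ) (W : Fin d → Fin d → ℝ)
    -- Wx ≠ 0 almost surely
    (hW0 : ∀ ω, 0 < p ω → mulVec' W (X ω) ≠ 0)
    (L : (Fin d → Fin d → ℝ) → ℝ)
    (hL : ∀ V, L V = ∑ ω, p ω * crossEntropy (Y ω)
      (fun k => ∑ i, wU k i * (mulVec' V (X ω) i / nrm (mulVec' V (X ω)))))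
    -- p̂_W(k|x) = σ(W_U (Wx/‖Wx‖))_k
    (phat : Ω → Fin N → ℝ)
    (hphat : ∀ ω k, phat ω k = softmax
      (fun k' => ∑ i, wU k' i * (mulVec' W (X ω) i / nrm (mulVec' W (X ω)))) k)
    -- the conditional probability p(y=k|x)
    (pcond : Ω → Fin N → ℝ)
    (hpcond : ∀ ω k, pcond ω k =
      (∑ ω' ∈ univ.filter (fun ω' => X ω' = X ω ∧ Y ω' = k), p ω') /
      (∑ ω' ∈ univ.filter (fun ω' => X ω' = X ω), p ω')) :
    ∀ a b, HasDerivAt (fun s : ℝ => L (updEntry W a b s))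
      (∑ k, ∑ ω, p ω * ((phat ω k - pcond ω k) / nrm (mulVec' W (X ω))) *
        ((wU k a - mulVec' W (X ω) a *
            (∑ i, mulVec' W (X ω) i * wU k i) / (nrm (mulVec' W (X ω))) ^ 2) *
          X ω b)) (W a b) := by
  intro a b
  have hsample : ∀ ω, HasDerivAt (fun s => p ω * crossEntropy (Y ω) (fun k => ∑ i, wU k i *
        (mulVec' (updEntry W a b s) (X ω) i / nrm (mulVec' (updEntry W a b s) (X ω)))))
      (p ω * ∑ k, (phat ω k - if Y ω = k then 1 else 0) * layerNormUpdate wU W (X ω) k a b)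
      (W a b) := by
    intro ω
    rcases (hp0 ω).eq_or_lt with hp | hp
    · simpa [← hp] using hasDerivAt_const (W a b) (0 : ℝ)
    · simpa only [hphat] using ((hasDerivAt_crossEntropy_layerNorm_updEntry wU W (X ω) (Y ω) a b
        (hW0 ω hp)).const_mul (p ω))
  simp only [hL]
  refine (HasDerivAt.fun_sum fun ω _ => hsample ω).congr_deriv ?_
  conv_lhs => simp only [mul_sum]
  rw [sum_comm]
  refine sum_congr rfl fun k _ => ?_
  have htower := sum_mul_condProb_mul_comp hp0 X (fun ω => Y ω = k)
    (fun x => layerNormUpdate wU W x k a b)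
  simp only [← hpcond] at htower
  calc ∑ ω, p ω * ((phat ω k - if Y ω = k then 1 else 0) * layerNormUpdate wU W (X ω) k a b)
      = ∑ ω, (p ω * phat ω k * layerNormUpdate wU W (X ω) k a b -
          p ω * (if Y ω = k then 1 else 0) * layerNormUpdate wU W (X ω) k a b) :=
        sum_congr rfl fun ω _ => by ring
    _ = ∑ ω, (p ω * phat ω k * layerNormUpdate wU W (X ω) k a b -
          p ω * pcond ω k * layerNormUpdate wU W (X ω) k a b) := by
        rw [sum_sub_distrib, sum_sub_distrib, htower]
    _ = _ := sum_congr rfl fun ω _ => by unfold layerNormUpdate; ring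

open Classical in
/-- for the layer-normalized loss `L(W) = E[ℓ(y, W_U (Wx/‖Wx‖))]`, the
gradient (stated entrywise) equals
`∑_k E_x[((p̂_W(k|x) - p(y=k|x))/‖Wx‖) (I - (Wx)(Wx)^⊤/‖Wx‖²) w_U(k) x^⊤]`. -/
theorem grad_layernorm_loss {N d : ℕ} {Ω : Type} [Fintype Ω]
    (p : Ω → ℝ) (hp0 : ∀ ω, 0 ≤ p ω) (hp1 : ∑ ω, p ω = 1)
    (X : Ω → Fin d → ℝ) (Y : Ω → Fin N)
    (wU : Fin N → Fin d → ℝ) (W : Fin d → Fin d → ℝ)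
    -- Wx ≠ 0 almost surely
    (hW0 : ∀ ω, 0 < p ω → mulVec' W (X ω) ≠ 0)
    (L : (Fin d → Fin d → ℝ) → ℝ)
    (hL : ∀ V, L V = ∑ ω, p ω * crossEntropy (Y ω)
      (fun k => ∑ i, wU k i * (mulVec' V (X ω) i / nrm (mulVec' V (X ω)))))
    -- p̂_W(k|x) = σ(W_U (Wx/‖Wx‖))_k
    (phat : Ω → Fin N → ℝ)
    (hphat : ∀ ω k, phat ω k = softmax
      (fun k' => ∑ i, wU k' i * (mulVec' W (X ω) i / nrm (mulVec' W (X ω)))) k)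
    -- the conditional probability p(y=k|x)
    (pcond : Ω → Fin N → ℝ)
    (hpcond : ∀ ω k, pcond ω k =
      (∑ ω' ∈ univ.filter (fun ω' => X ω' = X ω ∧ Y ω' = k), p ω') /
      (∑ ω' ∈ univ.filter (fun ω' => X ω' = X ω), p ω')) :
    ∀ a b, HasDerivAt (fun s : ℝ => L (updEntry W a b s))
      (∑ k, ∑ ω, p ω * ((phat ω k - pcond ω k) / nrm (mulVec' W (X ω))) *
        ((wU k a - mulVec' W (X ω) a *
            (∑ i, mulVec' W (X ω) i * wU k i) / (nrm (mulVec' W (X ω))) ^ 2) *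
          X ω b)) (W a b) :=
  grad_layernorm_loss_general p hp0 X Y wU W hW0 L hL phat hphat pcond hpcond
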